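/- Let Q be a subdivision of a partition P of [n+1], and let G be a graph on Q with an edge e = (α,β). Suppose that either (a) α ∪ β is included in a single piece of P, or (b) at least one of α, β is included in the minimum or the maximum piece of P. Then every y ∈ U_G^1 (defined with respect to Q) satisfies y ∉ ν_P or π_P(y) ∈ E_P. -/

import Mathlib

open scoped BigOperators
open Finset

noncomputable section

namespace SinhaKnots

attribute [local instance] Classical.propDecidable

/-- `ℝ^d` with the Euclidean norm. -/
abbrev Rd (d : ℕ) := EuclideanSpace ℝ (Fin d)

/-- `(ℝ^d)^m` with the Euclidean norm. -/
abbrev Vec (m d : ℕ) := PiLp 2 (fun _ : Fin m => Rd d)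

/-- The first standard basis vector `u = (1,0,…,0)` of `ℝ^d`. -/
def uVec (d : ℕ) : Rd d := if h : 0 < d then EuclideanSpace.single ⟨0, h⟩ 1 else 0

/-- The second standard basis vector `v = (0,1,0,…,0)` of `ℝ^d`. -/
def vVec (d : ℕ) : Rd d := if h : 1 < d then EuclideanSpace.single ⟨1, h⟩ 1 else 0

/-- The first coordinate of a vector of `ℝ^d`. -/
def fst {d : ℕ} (x : Rd d) : ℝ := if h : 0 < d then x ⟨0, h⟩ else 0

/-- A partition of `[n+1] = {0,1,…,n+1}` into (at least two) nonempty consecutive intervals,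
encoded as a monotone surjection onto `Fin (p+2)`; the pieces are the fibers, totally
ordered via the index, and `p` is the number of non-extremal pieces. -/
structure IntervalPartition (n : ℕ) where
  p : ℕ
  toFun : Fin (n + 2) → Fin (p + 2)
  mono : Monotone toFun
  surj : Function.Surjective toFun

/-- `Q` is a subdivision of `P`: every piece of `Q` is contained in a piece of `P`,
and `Q ≠ P` (equivalently, `Q` has strictly more pieces). -/
def Subdivides {n : ℕ} (Q P : IntervalPartition n) : Prop :=
  (∀ i j, Q.toFun i = Q.toFun j → P.toFun i = P.toFun j) ∧ P.p < Q.p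

/-- The element `i+1` of `[n+1]`, corresponding to the `i`-th component of `(ℝ^d)^n`. -/
def elt (n : ℕ) (i : Fin n) : Fin (n + 2) := ⟨(i : ℕ) + 1, by omega⟩

/-- The finest partition of `[n+1]`, into singletons. -/
def finest (n : ℕ) : IntervalPartition n :=
  ⟨n, id, monotone_id, Function.surjective_id⟩

variable {n : ℕ}

/-- The piece of `P` with index `a`, as a finite set of elements of `[n+1]`. -/
def fiber (P : IntervalPartition n) (a : Fin (P.p + 2)) : Finset (Fin (n + 2)) :=
  Finset.univ.filter fun i => P.toFun i = a

lemma fiber_nonempty (P : IntervalPartition n) (a : Fin (P.p + 2)) : (fiber P a).Nonempty := by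
  obtain ⟨i, hi⟩ := P.surj a
  exact ⟨i, by simp [fiber, hi]⟩

/-- The minimal element of a piece. -/
def minElt (P : IntervalPartition n) (a : Fin (P.p + 2)) : Fin (n + 2) :=
  (fiber P a).min' (fiber_nonempty P a)

/-- The maximal element of a piece. -/
def maxElt (P : IntervalPartition n) (a : Fin (P.p + 2)) : Fin (n + 2) :=
  (fiber P a).max' (fiber_nonempty P a)

/-- `c_α = ∑_{i ∈ α} c_i`. -/
def cPiece (c : Fin (n + 2) → ℝ) (P : IntervalPartition n) (a : Fin (P.p + 2)) : ℝ :=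
  ∑ i ∈ fiber P a, c i

/-- `c_{≤α} = ∑_{γ < α} c_γ + c_α/2`. -/
def cLE (c : Fin (n + 2) → ℝ) (P : IntervalPartition n) (a : Fin (P.p + 2)) : ℝ :=
  (∑ i ∈ Finset.univ.filter fun i => P.toFun i < a, c i) + cPiece c P a / 2

/-- `c_{≥α} = ∑_{γ > α} c_γ + c_α/2`. -/
def cGE (c : Fin (n + 2) → ℝ) (P : IntervalPartition n) (a : Fin (P.p + 2)) : ℝ :=
  (∑ i ∈ Finset.univ.filter fun i => a < P.toFun i, c i) + cPiece c P a / 2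

/-- `c_{αβ} = ∑_{α < γ < β} c_γ + (c_α + c_β)/2`. -/
def cBetween (c : Fin (n + 2) → ℝ) (P : IntervalPartition n) (a b : Fin (P.p + 2)) : ℝ :=
  (∑ i ∈ Finset.univ.filter fun i => a < P.toFun i ∧ P.toFun i < b, c i)
    + (cPiece c P a + cPiece c P b) / 2

/-- The tuple `x` indexed by the non-extremal pieces, extended to all pieces by the fixed
values `x₀ = (-1+ρc_{α₀}/2)u` and `x_{p+1} = (1-ρc_{α_{p+1}}/2)u` on the extremal pieces. -/
def extTuple (ρ : ℝ) (c : Fin (n + 2) → ℝ) (P : IntervalPartition n) {d : ℕ}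
    (x : Vec P.p d) : Fin (P.p + 2) → Rd d := fun a =>
  if _h0 : (a : ℕ) = 0 then (-1 + ρ * cPiece c P 0 / 2) • uVec d
  else if _h1 : (a : ℕ) = P.p + 1 then
    (1 - ρ * cPiece c P (Fin.last (P.p + 1)) / 2) • uVec d
  else x ⟨(a : ℕ) - 1, by have := a.isLt; omega⟩

/-- The displacement (along `u`) of the center of the subsegment corresponding to the
`Q`-piece of `i` inside the segment of the `P`-piece of `i`, for a refinement `Q` of `P`. -/
def offsetQ (ρ : ℝ) (c : Fin (n + 2) → ℝ) (P Q : IntervalPartition n) (i : Fin (n + 2)) : ℝ :=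
  ρ * (- cPiece c P (P.toFun i) / 2
    + (∑ j ∈ Finset.univ.filter fun j => P.toFun j = P.toFun i ∧ Q.toFun j < Q.toFun i, c j)
    + cPiece c Q (Q.toFun i) / 2)

/-- The affine injection `e_{P,Q} : (ℝ^d)^p → (ℝ^d)^q` for a refinement `Q` of `P`. -/
def eMap (ρ : ℝ) (c : Fin (n + 2) → ℝ) (P Q : IntervalPartition n) {d : ℕ}
    (x : Vec P.p d) : Vec Q.p d := WithLp.toLp 2 fun b =>
  extTuple ρ c P x (P.toFun (minElt Q (elt Q.p b)))
    + offsetQ ρ c P Q (minElt Q (elt Q.p b)) • uVec d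

/-- The affine injection `e_P : (ℝ^d)^p → (ℝ^d)^n`. -/
def ePt (ρ : ℝ) (c : Fin (n + 2) → ℝ) (P : IntervalPartition n) {d : ℕ}
    (x : Vec P.p d) : Vec n d :=
  eMap ρ c P (finest n) x

/-- `ε_P = ε/8^{n-p}`. -/
def epsP (ε : ℝ) (P : IntervalPartition n) : ℝ := ε / 8 ^ (n - P.p)

/-- The open `ε_P`-neighborhood `ν_P` of `e_P((ℝ^d)^p)` in `(ℝ^d)^n`. -/
def nuP (ρ ε : ℝ) (c : Fin (n + 2) → ℝ) (P : IntervalPartition n) (d : ℕ) : Set (Vec n d) :=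
  {y | ∃ x : Vec P.p d, ‖y - ePt ρ c P x‖ < epsP ε P}

/-- The orthogonal projection `π_P : (ℝ^d)^n → (ℝ^d)^p`, i.e. the unique minimizer of
`x ↦ |y - e_P(x)|`; explicitly, its `α`-component is the average of `y_i - o_i u` over the
elements `i` of the piece `α`, where `o_i` is the offset of `i` in `e_P`. -/
def projP (ρ : ℝ) (c : Fin (n + 2) → ℝ) (P : IntervalPartition n) {d : ℕ}
    (y : Vec n d) : Vec P.p d := WithLp.toLp 2 fun a =>
  ((Finset.univ.filter fun i : Fin n => P.toFun (elt n i) = elt P.p a).card : ℝ)⁻¹ •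
    ∑ i ∈ Finset.univ.filter fun i : Fin n => P.toFun (elt n i) = elt P.p a,
      (y i - offsetQ ρ c P (finest n) (elt n i) • uVec d)

/-- The component of a tuple `x ∈ (ℝ^d)^m` at a non-extremal vertex index `w` (and `0` at
the extremal indices, where there is no component). -/
def comp {m d : ℕ} (x : Vec m d) (w : Fin (m + 2)) : Rd d :=
  if h : 0 < (w : ℕ) ∧ (w : ℕ) < m + 1 then x ⟨(w : ℕ) - 1, by omega⟩ else 0

/-- `d_{αβ}(P) = ρ c_{αβ} - ε_P`. -/
def dBound (ρ ε : ℝ) (c : Fin (n + 2) → ℝ) (P : IntervalPartition n)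
    (a b : Fin (P.p + 2)) : ℝ :=
  ρ * cBetween c P a b - epsP ε P

/-- `D_{αβ} = {x : |x_α - x_β| ≤ d_{αβ}(P)}`. -/
def Dset (ρ ε : ℝ) (c : Fin (n + 2) → ℝ) (P : IntervalPartition n) (d : ℕ)
    (a b : Fin (P.p + 2)) : Set (Vec P.p d) :=
  {x | ‖comp x a - comp x b‖ ≤ dBound ρ ε c P a b}

/-- `E_α`. -/
def Eset (ρ ε : ℝ) (c : Fin (n + 2) → ℝ) (P : IntervalPartition n) (d : ℕ)
    (a : Fin (P.p + 2)) : Set (Vec P.p d) :=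
  {x | 1 - ρ * cPiece c P a / 2 + epsP ε P ≤ ‖comp x a‖
    ∨ fst (comp x a) ≤ -1 + ρ * cLE c P a - epsP ε P
    ∨ 1 - ρ * cGE c P a + epsP ε P ≤ fst (comp x a)}

/-- `E_P = ⋃_α E_α` over the non-extremal pieces `α`. -/
def EsetP (ρ ε : ℝ) (c : Fin (n + 2) → ℝ) (P : IntervalPartition n) (d : ℕ) :
    Set (Vec P.p d) :=
  ⋃ a ∈ {a : Fin (P.p + 2) | 0 < (a : ℕ) ∧ (a : ℕ) < P.p + 1}, Eset ρ ε c P d a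

/-- The configuration space `E(P) ⊂ (ℝ^d)^p`. -/
def Econf (ρ : ℝ) (c : Fin (n + 2) → ℝ) (P : IntervalPartition n) (d : ℕ) :
    Set (Vec P.p d) :=
  {x | (∀ w : Fin (P.p + 2), 0 < (w : ℕ) → (w : ℕ) < P.p + 1 →
          ‖comp x w‖ ≤ 1 - ρ * cPiece c P w / 2 ∧
          -1 + ρ * cLE c P w ≤ fst (comp x w) ∧
          fst (comp x w) ≤ 1 - ρ * cGE c P w) ∧
       ∀ w w' : Fin (P.p + 2), 0 < (w : ℕ) → (w' : ℕ) < P.p + 1 → w < w' →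
          ρ * cBetween c P w w' ≤ ‖comp x w - comp x w'‖}

/-! ### Graphs -/

/-- A graph on a partition with `m` non-extremal pieces: a finite set of edges, each being a
pair of vertices (vertices are the pieces, i.e. elements of `Fin (m+2)`). -/
abbrev GraphOn (m : ℕ) := Finset (Fin (m + 2) × Fin (m + 2))

/-- The edges go between non-extremal vertices and are increasing pairs. -/
def IsGraphOn {m : ℕ} (G : GraphOn m) : Prop :=
  ∀ e ∈ G, 0 < (e.1 : ℕ) ∧ e.1 < e.2 ∧ (e.2 : ℕ) < m + 1

/-- Adjacency relation of a graph. -/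
def adj {m : ℕ} (G : GraphOn m) (a b : Fin (m + 2)) : Prop :=
  ∃ e ∈ G, (e.1 = a ∧ e.2 = b) ∨ (e.1 = b ∧ e.2 = a)

/-- `conn G a b` : `a` and `b` lie in the same connected component of `G`. -/
def conn {m : ℕ} (G : GraphOn m) : Fin (m + 2) → Fin (m + 2) → Prop :=
  Relation.ReflTransGen (adj G)

/-- A vertex is discrete if no edge is incident with it. -/
def IsDiscrete {m : ℕ} (G : GraphOn m) (a : Fin (m + 2)) : Prop :=
  ∀ e ∈ G, e.1 ≠ a ∧ e.2 ≠ a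

lemma adj_symm {m : ℕ} (G : GraphOn m) : Symmetric (adj G) := by
  rintro a b ⟨e, he, h⟩
  exact ⟨e, he, h.symm⟩

/-- Being in the same connected component is an equivalence relation. -/
def connSetoid {m : ℕ} (G : GraphOn m) : Setoid (Fin (m + 2)) where
  r := conn G
  iseqv := by
    refine ⟨fun _ => Relation.ReflTransGen.refl, ?_, fun h h' => h.trans h'⟩
    intro x y h
    induction h with
    | refl => exact Relation.ReflTransGen.refl
    | tail _ hbc ih => exact Relation.ReflTransGen.head (adj_symm G hbc) ih

/-- The number of connected components of a graph (all `m+2` vertices included). -/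
def ncomp {m : ℕ} (G : GraphOn m) : ℕ := Fintype.card (Quotient (connSetoid G))

/-- `e` is a bridge of `G` if removing it increases the number of connected components. -/
def IsBridge {m : ℕ} (G : GraphOn m) (e : Fin (m + 2) × Fin (m + 2)) : Prop :=
  e ∈ G ∧ ncomp G < ncomp (G.erase e)

/-! ### Condensed maps -/

/-- The convex hull of `{f_j(x) : j ∈ α}`. -/
def hullPoints {d : ℕ} (P : IntervalPartition n) {X : Type*} (f : X → Vec n d) (x : X)
    (a : Fin (P.p + 2)) : Set (Rd d) :=
  convexHull ℝ {q | ∃ j : Fin n, P.toFun (elt n j) = a ∧ q = f x j}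

/-- `a` is a base (of its connected component of `G`) for the map `f`. -/
def IsBase {d : ℕ} (P : IntervalPartition n) (G : GraphOn P.p) {X : Type*}
    (f : X → Vec n d) (a : Fin (P.p + 2)) : Prop :=
  (∀ x : X, ∀ b, conn G a b → ∀ i : Fin n, P.toFun (elt n i) = b →
      f x i ∈ hullPoints P f x a)
  ∧ ∀ e ∈ G, conn G a e.1 → ¬(e.1 < a ∧ e.2 < a)

/-- A map `f : X → (ℝ^d)^n` is `G`-condensed: it is proper and each connected component
of `G` has a base. -/
def IsCondensed {d : ℕ} (P : IntervalPartition n) (G : GraphOn P.p) {X : Type*}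
    [TopologicalSpace X] (f : X → Vec n d) : Prop :=
  IsProperMap f ∧ ∀ a : Fin (P.p + 2), ∃ b, conn G a b ∧ IsBase P G f b

/-- `⋂_{(α,β) ∈ E(G)} D_{αβ}`. -/
def interD (ρ ε : ℝ) (c : Fin (n + 2) → ℝ) (P : IntervalPartition n) (d : ℕ)
    (G : GraphOn P.p) : Set (Vec P.p d) :=
  ⋂ e ∈ G, Dset ρ ε c P d e.1 e.2

/-- `U_G`. -/
def Uset (ρ ε : ℝ) (c : Fin (n + 2) → ℝ) (P : IntervalPartition n) (d : ℕ)
    (G : GraphOn P.p) : Set (Vec n d) :=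
  (nuP ρ ε c P d)ᶜ ∪ (projP ρ c P) ⁻¹' (interD ρ ε c P d G)

/-- Product of the projections to the first coordinate. -/
def p1 {m d : ℕ} (y : Vec m d) : Fin m → ℝ := fun i => fst (y i)

/-- `U_G^1`. -/
def Uset1 (ρ ε : ℝ) (c : Fin (n + 2) → ℝ) (P : IntervalPartition n) (d : ℕ)
    (G : GraphOn P.p) : Set (Vec n d) :=
  (p1 ⁻¹' (p1 '' nuP ρ ε c P d))ᶜ
    ∪ p1 ⁻¹' (p1 '' ((projP ρ c P) ⁻¹' (interD ρ ε c P d G)))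

/-! ### Contractions and homotopies -/

/-- The translation vector `A_e(s)` of the `e`-contraction. -/
def Acontr {d : ℕ} (P : IntervalPartition n) (G : GraphOn P.p)
    (e : Fin (P.p + 2) × Fin (P.p + 2)) (s : ℝ) : Vec n d := WithLp.toLp 2 fun i =>
  if conn (G.erase e) (P.toFun (elt n i)) e.1 then s • vVec d
  else if conn (G.erase e) (P.toFun (elt n i)) e.2 then -(s • vVec d) else 0

/-- The `e`-contraction `F(x,s) = f(x) + A_e(s)` of `f` for `G`. -/
def econtr {d : ℕ} (P : IntervalPartition n) (G : GraphOn P.p)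
    (e : Fin (P.p + 2) × Fin (P.p + 2)) {X : Type*} (f : X → Vec n d) :
    X × ↥(Set.Ici (0 : ℝ)) → Vec n d :=
  fun q => f q.1 + Acontr P G e (q.2 : ℝ)

/-- The `(e,e')`-contraction `F(x,s₁,s₂) = f(x) + A_e(s₁) + A_{e'}(s₂)` of `f` for `G`. -/
def eecontr {d : ℕ} (P : IntervalPartition n) (G : GraphOn P.p)
    (e e' : Fin (P.p + 2) × Fin (P.p + 2)) {X : Type*} (f : X → Vec n d) :
    X × ↥(Set.Ici (0 : ℝ)) × ↥(Set.Ici (0 : ℝ)) → Vec n d :=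
  fun q => f q.1 + Acontr P G e (q.2.1 : ℝ) + Acontr P G e' (q.2.2 : ℝ)

/-- The `(i,σ)`-contraction of a map `F` (σ = ±1): add `σsu` to the `i`-th component and
`-σsu` to the `(i+1)`-th component. Components are numbered `1,…,m` (the `k`-th coordinate
of `Vec m d` is component number `k+1`). -/
def icontr {m d : ℕ} {Y : Type*} (F : Y → Vec m d) (i : ℕ) (σ : ℝ) :
    Y × ↥(Set.Ici (0 : ℝ)) → Vec m d :=
  fun q => WithLp.toLp 2 fun k => F q.1 k +
    (if (k : ℕ) + 1 = i then σ * (q.2 : ℝ)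
     else if (k : ℕ) + 1 = i + 1 then -(σ * (q.2 : ℝ)) else 0) • uVec d

/-- The straight homotopy from `f` to `g`. -/
def straightH {V : Type*} [AddCommGroup V] [Module ℝ V] {Y : Type*} (f g : Y → V) :
    Y × ↥(Set.Icc (0 : ℝ) 1) → V :=
  fun q => (1 - (q.2 : ℝ)) • f q.1 + (q.2 : ℝ) • g q.1

/-! ### Merging pieces (the face operations δ) -/

/-- Value of the vertex map merging the pieces (0-based) `k` and `k+1`. -/
def vmapVal (m k : ℕ) (a : ℕ) : ℕ :=
  if m = 0 then a else min (if a ≤ k then a else a - 1) m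

/-- The vertex map of the merge, `Fin (m+2) → Fin (m-1+2)`. -/
def vmapFin (m k : ℕ) (a : Fin (m + 2)) : Fin (m - 1 + 2) :=
  ⟨vmapVal m k (a : ℕ), by have := a.isLt; unfold vmapVal; split <;> omega⟩

/-- The partition `δ_kP` obtained from `P` by uniting its `(k+1)`-th and `(k+2)`-th pieces
(i.e. the pieces of 0-based indices `k` and `k+1`). -/
def deltaPart (P : IntervalPartition n) (k : ℕ) : IntervalPartition n where
  p := P.p - 1
  toFun := fun i => vmapFin P.p k (P.toFun i)
  mono := by
    intro a b hab
    have h2 : (P.toFun a : ℕ) ≤ (P.toFun b : ℕ) := P.mono hab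
    simp only [vmapFin, Fin.mk_le_mk, vmapVal]
    split_ifs <;> omega
  surj := by
    intro b
    have hb := b.isLt
    by_cases h0 : P.p = 0
    · obtain ⟨i, hi⟩ := P.surj ⟨(b : ℕ), by omega⟩
      refine ⟨i, Fin.ext ?_⟩
      simp only [vmapFin, vmapVal, hi, h0, if_true]
    · rcases le_or_gt (b : ℕ) k with hbk | hbk
      · obtain ⟨i, hi⟩ := P.surj ⟨(b : ℕ), by omega⟩
        refine ⟨i, Fin.ext ?_⟩
        simp only [vmapFin, vmapVal, hi, h0, if_false]
        split_ifs <;> omega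
      · obtain ⟨i, hi⟩ := P.surj ⟨(b : ℕ) + 1, by omega⟩
        refine ⟨i, Fin.ext ?_⟩
        simp only [vmapFin, vmapVal, hi, h0, if_false]
        split_ifs <;> omega

/-- For a refinement pair (`Q` refines `P`): the piece of `P` containing a given piece of
`Q`. -/
def pieceMap (Q P : IntervalPartition n) : Fin (Q.p + 2) → Fin (P.p + 2) :=
  fun b => P.toFun (minElt Q b)

/-- The image graph on a coarser partition (e.g. `δ_iG` on `δ_iQ`). -/
def pushGraph (Q P : IntervalPartition n) (G : GraphOn Q.p) : GraphOn P.p :=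
  G.image fun e => (pieceMap Q P e.1, pieceMap Q P e.2)

/-- The image graph is an honest graph: no loops nor double edges are created
(injectivity of the edge map) and no edge is incident with an extremal piece. -/
def GoodPush (Q P : IntervalPartition n) (G : GraphOn Q.p) : Prop :=
  Set.InjOn (fun e : Fin (Q.p + 2) × Fin (Q.p + 2) => (pieceMap Q P e.1, pieceMap Q P e.2)) ↑G
  ∧ IsGraphOn (pushGraph Q P G)


/-! ### Auxiliary lemmas -/

section Aux

variable {n : ℕ}

lemma fst_add' {d : ℕ} (x y : Rd d) : fst (x + y) = fst x + fst y := by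
  unfold fst; split_ifs with h
  · rfl
  · ring

lemma fst_sub' {d : ℕ} (x y : Rd d) : fst (x - y) = fst x - fst y := by
  unfold fst; split_ifs with h
  · rfl
  · ring

lemma fst_smul' {d : ℕ} (r : ℝ) (x : Rd d) : fst (r • x) = r * fst x := by
  unfold fst; split_ifs with h
  · rfl
  · ring

lemma fst_zero' {d : ℕ} : fst (0 : Rd d) = 0 := by
  unfold fst; split_ifs with h
  · rfl
  · rfl

lemma fst_sum' {d : ℕ} {ι : Type*} (s : Finset ι) (f : ι → Rd d) :
    fst (∑ i ∈ s, f i) = ∑ i ∈ s, fst (f i) := by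
  classical
  induction s using Finset.cons_induction with
  | empty => simp [fst_zero']
  | cons a s ha ih => rw [Finset.sum_cons, Finset.sum_cons, fst_add', ih]

lemma fst_uVec {d : ℕ} (hd : 1 ≤ d) : fst (uVec d) = 1 := by
  have h : 0 < d := hd
  simp [fst, uVec, h, EuclideanSpace.single_apply]

lemma piLp2_apply_le {ι : Type*} [Fintype ι] {β : ι → Type*} [∀ i, SeminormedAddCommGroup (β i)]
    (x : PiLp 2 β) (i : ι) : ‖x i‖ ≤ ‖x‖ := by
  have h := PiLp.norm_sq_eq_of_L2 β x
  have h1 : ‖x i‖ ^ 2 ≤ ‖x‖ ^ 2 := by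
    rw [h]
    exact Finset.single_le_sum (f := fun j => ‖x j‖ ^ 2) (fun _ _ => sq_nonneg _)
      (Finset.mem_univ i)
  nlinarith [norm_nonneg (x i), norm_nonneg x]

lemma abs_fst_le {d : ℕ} (x : Rd d) : |fst x| ≤ ‖x‖ := by
  unfold fst; split_ifs with h
  · calc |x ⟨0, h⟩| = ‖x ⟨0, h⟩‖ := rfl
      _ ≤ ‖x‖ := piLp2_apply_le x _
  · simp

lemma epsP_pos {ε : ℝ} (hε : 0 < ε) (P : IntervalPartition n) : 0 < epsP ε P := by
  unfold epsP; positivity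

lemma p_le_n (R : IntervalPartition n) : R.p ≤ n := by
  have := Fintype.card_le_of_surjective R.toFun R.surj
  simpa using this

lemma toFun_zero (R : IntervalPartition n) : R.toFun 0 = 0 := by
  obtain ⟨k, hk⟩ := R.surj 0
  exact le_antisymm (hk ▸ R.mono (Fin.zero_le k)) (Fin.zero_le _)

lemma toFun_last (R : IntervalPartition n) : R.toFun (Fin.last (n + 1)) = Fin.last (R.p + 1) := by
  obtain ⟨k, hk⟩ := R.surj (Fin.last _)
  exact le_antisymm (Fin.le_last _) (hk ▸ R.mono (Fin.le_last k))

lemma lt_of_toFun_lt (R : IntervalPartition n) {i j : Fin (n + 2)}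
    (h : R.toFun i < R.toFun j) : i < j := by
  by_contra hc
  exact absurd (R.mono (not_lt.1 hc)) (not_le.2 h)

lemma toFun_minElt (R : IntervalPartition n) (a : Fin (R.p + 2)) :
    R.toFun (minElt R a) = a := by
  have := (Finset.mem_filter.1 (Finset.min'_mem (fiber R a) (fiber_nonempty R a))).2
  exact this

lemma minElt_le (R : IntervalPartition n) {a : Fin (R.p + 2)} {j : Fin (n + 2)}
    (h : R.toFun j = a) : minElt R a ≤ j :=
  Finset.min'_le _ _ (by simp [fiber, h])

lemma lt_minElt (R : IntervalPartition n) {a : Fin (R.p + 2)} {j : Fin (n + 2)}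
    (h : R.toFun j < a) : j < minElt R a :=
  lt_of_toFun_lt R (by rwa [toFun_minElt])

lemma minElt_le_of_le (R : IntervalPartition n) {a : Fin (R.p + 2)} {j : Fin (n + 2)}
    (h : a ≤ R.toFun j) : minElt R a ≤ j := by
  rcases eq_or_lt_of_le h with h' | h'
  · exact minElt_le R h'.symm
  · exact le_of_lt (lt_of_toFun_lt R (by rwa [toFun_minElt]))

lemma minElt_finest (k : Fin (n + 2)) : minElt (finest n) k = k := by
  have h : fiber (finest n) k = {k} := by
    ext j; simp [fiber, finest]
    exact ⟨fun h => (Finset.mem_filter.1 h).2, fun h => Finset.mem_filter.2 ⟨Finset.mem_univ _, h⟩⟩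
  simp [minElt, h]

lemma cPiece_finest (c : Fin (n + 2) → ℝ) (k : Fin (n + 2)) :
    cPiece c (finest n) k = c k := by
  have h : fiber (finest n) k = {k} := by
    ext j; simp [fiber, finest]
    exact ⟨fun h => (Finset.mem_filter.1 h).2, fun h => Finset.mem_filter.2 ⟨Finset.mem_univ _, h⟩⟩
  simp [cPiece, h]

lemma sum_split3 (c : Fin (n + 2) → ℝ) (p q r : Fin (n + 2) → Prop)
    [DecidablePred p] [DecidablePred q] [DecidablePred r]
    (h : ∀ j, p j ↔ q j ∨ r j) (hdis : ∀ j, ¬(q j ∧ r j)) :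
    ∑ j ∈ Finset.univ.filter p, c j
      = ∑ j ∈ Finset.univ.filter q, c j + ∑ j ∈ Finset.univ.filter r, c j := by
  classical
  have hU : Finset.univ.filter p = Finset.univ.filter q ∪ Finset.univ.filter r := by
    rw [← Finset.filter_or]
    exact Finset.filter_congr fun j _ => h j
  rw [hU, Finset.sum_union]
  rw [Finset.disjoint_left]
  intro a ha hb
  simp only [Finset.mem_filter] at ha hb
  exact hdis a ⟨ha.2, hb.2⟩

end Aux
section Aux2

variable {n : ℕ}

lemma epsP_le_epsP {ε : ℝ} (hε : 0 < ε) {P Q : IntervalPartition n}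
    (hpq : P.p < Q.p) : 8 * epsP ε P ≤ epsP ε Q := by
  have hQn : Q.p ≤ n := p_le_n Q
  unfold epsP
  have h1 : (0:ℝ) < 8 ^ (n - P.p) := by positivity
  have h2 : (0:ℝ) < 8 ^ (n - Q.p) := by positivity
  rw [mul_div_assoc', div_le_div_iff₀ h1 h2]
  have hk : n - P.p = (n - Q.p) + (n - P.p - (n - Q.p)) := by omega
  have hk1 : 1 ≤ n - P.p - (n - Q.p) := by omega
  have h8 : (8:ℝ) ≤ 8 ^ (n - P.p - (n - Q.p)) := by
    calc (8:ℝ) = 8 ^ 1 := (pow_one 8).symm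
    _ ≤ 8 ^ (n - P.p - (n - Q.p)) := pow_le_pow_right₀ (by norm_num) hk1
  calc 8 * ε * 8 ^ (n - Q.p) = ε * (8 ^ (n - Q.p) * 8) := by ring
  _ ≤ ε * (8 ^ (n - Q.p) * 8 ^ (n - P.p - (n - Q.p))) := by
      apply mul_le_mul_of_nonneg_left _ hε.le
      exact mul_le_mul_of_nonneg_left h8 h2.le
  _ = ε * 8 ^ (n - P.p) := by rw [← pow_add, ← hk]

lemma offset_cocycle (ρ : ℝ) (c : Fin (n + 2) → ℝ) (P Q : IntervalPartition n)
    (hsub : ∀ i j, Q.toFun i = Q.toFun j → P.toFun i = P.toFun j) (i : Fin (n + 2)) :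
    offsetQ ρ c P (finest n) i = offsetQ ρ c Q (finest n) i + offsetQ ρ c P Q i := by
  have hsplit : ∑ j ∈ Finset.univ.filter
        (fun j => P.toFun j = P.toFun i ∧ (finest n).toFun j < (finest n).toFun i), c j
      = ∑ j ∈ Finset.univ.filter
          (fun j => Q.toFun j = Q.toFun i ∧ (finest n).toFun j < (finest n).toFun i), c j
        + ∑ j ∈ Finset.univ.filter
            (fun j => P.toFun j = P.toFun i ∧ Q.toFun j < Q.toFun i), c j := by
    apply sum_split3
    · intro j
      show (P.toFun j = P.toFun i ∧ j < i) ↔ _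
      constructor
      · rintro ⟨hP, hji⟩
        rcases eq_or_lt_of_le (Q.mono hji.le) with hQ | hQ
        · exact Or.inl ⟨hQ, hji⟩
        · exact Or.inr ⟨hP, hQ⟩
      · rintro (⟨hQ, hji⟩ | ⟨hP, hQ⟩)
        · exact ⟨hsub j i hQ, hji⟩
        · exact ⟨hP, lt_of_toFun_lt Q hQ⟩
    · rintro j ⟨⟨hQ, _⟩, ⟨_, hQ'⟩⟩
      exact absurd hQ (ne_of_lt hQ')
  unfold offsetQ
  rw [hsplit, show cPiece c (finest n) ((finest n).toFun i) = c i from cPiece_finest c i]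
  show ρ * _ = ρ * _ + ρ * (_ + _ + cPiece c Q (Q.toFun i) / 2)
  ring

lemma offsetQ_congr (ρ : ℝ) (c : Fin (n + 2) → ℝ) (P Q : IntervalPartition n)
    (hsub : ∀ i j, Q.toFun i = Q.toFun j → P.toFun i = P.toFun j) {i i' : Fin (n + 2)}
    (h : Q.toFun i = Q.toFun i') : offsetQ ρ c P Q i = offsetQ ρ c P Q i' := by
  have hP := hsub i i' h
  unfold offsetQ
  rw [hP, h]

lemma ePt_apply (ρ : ℝ) (c : Fin (n + 2) → ℝ) (R : IntervalPartition n) {d : ℕ}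
    (x : Vec R.p d) (i : Fin n) :
    ePt ρ c R x i = extTuple ρ c R x (R.toFun (elt n i))
      + offsetQ ρ c R (finest n) (elt n i) • uVec d := by
  show extTuple ρ c R x (R.toFun (minElt (finest n) (elt n i)))
      + offsetQ ρ c R (finest n) (minElt (finest n) (elt n i)) • uVec d = _
  rw [minElt_finest]

end Aux2
section Aux3

variable {n : ℕ}

lemma toFun_eq_zero (P Q : IntervalPartition n)
    (hsub : ∀ i j, Q.toFun i = Q.toFun j → P.toFun i = P.toFun j) {j : Fin (n + 2)}
    (h : Q.toFun j = 0) : P.toFun j = 0 := by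
  have := hsub j 0 (by rw [h, toFun_zero])
  rw [this, toFun_zero]

lemma toFun_eq_last (P Q : IntervalPartition n)
    (hsub : ∀ i j, Q.toFun i = Q.toFun j → P.toFun i = P.toFun j) {j : Fin (n + 2)}
    (h : Q.toFun j = Fin.last (Q.p + 1)) : P.toFun j = Fin.last (P.p + 1) := by
  have := hsub j (Fin.last (n + 1)) (by rw [h, toFun_last])
  rw [this, toFun_last]

lemma sum_lt_last (c : Fin (n + 2) → ℝ) (P Q : IntervalPartition n)
    (hsub : ∀ i j, Q.toFun i = Q.toFun j → P.toFun i = P.toFun j) {j : Fin (n + 2)}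
    (hQl : Q.toFun j = Fin.last (Q.p + 1)) :
    ∑ k ∈ Finset.univ.filter (fun k => P.toFun k = P.toFun j ∧ Q.toFun k < Q.toFun j), c k
      = cPiece c P (P.toFun j) - cPiece c Q (Q.toFun j) := by
  have h := sum_split3 c (fun k => P.toFun k = P.toFun j)
      (fun k => P.toFun k = P.toFun j ∧ Q.toFun k < Q.toFun j)
      (fun k => Q.toFun k = Q.toFun j) ?_ ?_
  · have hP : cPiece c P (P.toFun j)
        = ∑ k ∈ Finset.univ.filter (fun k => P.toFun k = P.toFun j), c k := rfl
    have hQ : cPiece c Q (Q.toFun j)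
        = ∑ k ∈ Finset.univ.filter (fun k => Q.toFun k = Q.toFun j), c k := rfl
    rw [hP, hQ, h]; ring
  · intro k
    constructor
    · intro hPk
      rcases lt_or_eq_of_le (hQl ▸ Fin.le_last (Q.toFun k)) with hlt | heq
      · exact Or.inl ⟨hPk, hQl ▸ hlt⟩
      · exact Or.inr (hQl ▸ heq)
    · rintro (⟨hPk, -⟩ | hQk)
      · exact hPk
      · exact hsub k j hQk
  · rintro k ⟨⟨-, hlt⟩, heq⟩
    exact absurd heq (ne_of_lt hlt)

lemma ePt_factor (ρ : ℝ) (c : Fin (n + 2) → ℝ) (P Q : IntervalPartition n) {d : ℕ}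
    (hsub : ∀ i j, Q.toFun i = Q.toFun j → P.toFun i = P.toFun j) (x : Vec P.p d) :
    ePt ρ c Q (eMap ρ c P Q x) = ePt ρ c P x := by
  apply PiLp.ext; intro i
  rw [ePt_apply, ePt_apply, offset_cocycle ρ c P Q hsub (elt n i), add_smul]
  have key : extTuple ρ c Q (eMap ρ c P Q x) (Q.toFun (elt n i))
      = extTuple ρ c P x (P.toFun (elt n i)) + offsetQ ρ c P Q (elt n i) • uVec d := by
    set j := elt n i with hjdef
    by_cases h0 : (Q.toFun j : ℕ) = 0
    · have hQ0 : Q.toFun j = 0 := Fin.ext (by simpa using h0)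
      have hP0 : P.toFun j = 0 := toFun_eq_zero P Q hsub hQ0
      have hP0v : (P.toFun j : ℕ) = 0 := by rw [hP0]; rfl
      have hsum : Finset.univ.filter
          (fun k => P.toFun k = P.toFun j ∧ Q.toFun k < Q.toFun j) = ∅ := by
        apply Finset.filter_false_of_mem
        rintro k - ⟨-, hk⟩
        rw [hQ0] at hk
        rw [Fin.lt_def] at hk
        simp at hk
      simp only [extTuple, dif_pos h0, dif_pos hP0v, offsetQ, hsum, Finset.sum_empty]
      rw [← add_smul]
      congr 1
      rw [hP0, hQ0]
      ring
    · by_cases hl : (Q.toFun j : ℕ) = Q.p + 1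
      · have hQl : Q.toFun j = Fin.last (Q.p + 1) := Fin.ext (by simpa using hl)
        have hPl : P.toFun j = Fin.last (P.p + 1) := toFun_eq_last P Q hsub hQl
        have hPlv : (P.toFun j : ℕ) = P.p + 1 := by rw [hPl]; rfl
        have hP0v : ¬(P.toFun j : ℕ) = 0 := by omega
        have hQ0v : ¬(Q.toFun j : ℕ) = 0 := h0
        simp only [extTuple, dif_neg hQ0v, dif_pos hl, dif_neg hP0v, dif_pos hPlv, offsetQ,
          sum_lt_last c P Q hsub hQl]
        rw [← add_smul]
        congr 1
        rw [hPl, hQl]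
        ring
      · have h0' : ¬(Q.toFun j : ℕ) = 0 := h0
        simp only [extTuple, dif_neg h0', dif_neg hl]
        have helt : elt Q.p ⟨(Q.toFun j : ℕ) - 1, by have := (Q.toFun j).isLt; omega⟩
            = Q.toFun j := by
          apply Fin.ext
          simp [elt]
          omega
        show eMap ρ c P Q x _ = _
        rw [eMap, PiLp.toLp_apply, helt]
        have hm : Q.toFun (minElt Q (Q.toFun j)) = Q.toFun j := toFun_minElt Q _
        rw [hsub _ _ hm, offsetQ_congr ρ c P Q hsub hm]
        rfl
  rw [key]
  abel

end Aux3
section Aux4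

variable {n : ℕ}

lemma avg_bound (ρ : ℝ) (c : Fin (n + 2) → ℝ) (R : IntervalPartition n) {d : ℕ} (hd : 1 ≤ d)
    (x : Vec R.p d) (y : Vec n d) {E : ℝ}
    (herr : ∀ i : Fin n, |fst (y i) - fst (ePt ρ c R x i)| ≤ E)
    {b : Fin (R.p + 2)} (hb0 : 0 < (b : ℕ)) (hbl : (b : ℕ) < R.p + 1) :
    |fst (comp (projP ρ c R y) b) - fst (extTuple ρ c R x b)| ≤ E := by
  classical
  set F := Finset.univ.filter (fun i : Fin n => R.toFun (elt n i) = b) with hF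
  have hne : F.Nonempty := by
    obtain ⟨k, hk⟩ := R.surj b
    have hk0 : (k : ℕ) ≠ 0 := by
      intro h
      have : k = 0 := Fin.ext h
      rw [this, toFun_zero] at hk
      rw [← hk] at hb0
      simp at hb0
    have hkl : (k : ℕ) ≠ n + 1 := by
      intro h
      have : k = Fin.last (n + 1) := Fin.ext h
      rw [this, toFun_last] at hk
      rw [← hk] at hbl
      simp [Fin.last] at hbl
    have hklt := k.isLt
    refine ⟨⟨(k : ℕ) - 1, by omega⟩, ?_⟩
    have : elt n ⟨(k : ℕ) - 1, by omega⟩ = k := Fin.ext (by simp [elt]; omega)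
    simp [hF, this, hk]
  have hcd : (0 : ℝ) < (F.card : ℝ) := by exact_mod_cast Finset.card_pos.2 hne
  set a : Fin R.p := ⟨(b : ℕ) - 1, by omega⟩ with ha
  have helt : elt R.p a = b := Fin.ext (by simp [elt, ha]; omega)
  have hcomp : comp (projP ρ c R y) b = projP ρ c R y a := by
    unfold comp
    rw [dif_pos ⟨hb0, hbl⟩]
  have hproj : projP ρ c R y a
      = (F.card : ℝ)⁻¹ • ∑ i ∈ F, (y i - offsetQ ρ c R (finest n) (elt n i) • uVec d) := by
    simp only [projP, PiLp.toLp_apply, helt, hF]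
  have hfst : fst (comp (projP ρ c R y) b)
      = (F.card : ℝ)⁻¹ * ∑ i ∈ F, (fst (y i) - offsetQ ρ c R (finest n) (elt n i)) := by
    rw [hcomp, hproj, fst_smul', fst_sum']
    congr 1
    refine Finset.sum_congr rfl fun i _ => ?_
    rw [fst_sub', fst_smul', fst_uVec hd, mul_one]
  have hterm : ∀ i ∈ F, fst (y i) - offsetQ ρ c R (finest n) (elt n i)
      = (fst (y i) - fst (ePt ρ c R x i)) + fst (extTuple ρ c R x b) := by
    intro i hi
    have hib : R.toFun (elt n i) = b := by
      simpa [hF] using hi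
    rw [ePt_apply, fst_add', fst_smul', fst_uVec hd, hib]
    ring
  have hsum : ∑ i ∈ F, (fst (y i) - offsetQ ρ c R (finest n) (elt n i))
      = (∑ i ∈ F, (fst (y i) - fst (ePt ρ c R x i)))
        + (F.card : ℝ) * fst (extTuple ρ c R x b) := by
    rw [Finset.sum_congr rfl hterm, Finset.sum_add_distrib, Finset.sum_const, nsmul_eq_mul]
  have hmain : fst (comp (projP ρ c R y) b) - fst (extTuple ρ c R x b)
      = (F.card : ℝ)⁻¹ * ∑ i ∈ F, (fst (y i) - fst (ePt ρ c R x i)) := by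
    rw [hfst, hsum]
    field_simp
    ring
  rw [hmain, abs_mul, abs_of_nonneg (inv_nonneg.2 hcd.le)]
  have h1 : |∑ i ∈ F, (fst (y i) - fst (ePt ρ c R x i))| ≤ (F.card : ℝ) * E := by
    calc |∑ i ∈ F, (fst (y i) - fst (ePt ρ c R x i))|
        ≤ ∑ i ∈ F, |fst (y i) - fst (ePt ρ c R x i)| := Finset.abs_sum_le_sum_abs _ _
      _ ≤ F.card • E := Finset.sum_le_card_nsmul F _ E fun i _ => herr i
      _ = (F.card : ℝ) * E := nsmul_eq_mul _ _
  calc (F.card : ℝ)⁻¹ * |∑ i ∈ F, (fst (y i) - fst (ePt ρ c R x i))|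
      ≤ (F.card : ℝ)⁻¹ * ((F.card : ℝ) * E) := by
        exact mul_le_mul_of_nonneg_left h1 (inv_nonneg.2 hcd.le)
    _ = E := by field_simp

end Aux4
section Aux5

variable {n : ℕ}

lemma toFun_le_of_lt_piece (P Q : IntervalPartition n) {γ : Fin (Q.p + 2)} {j : Fin (n + 2)}
    (h : Q.toFun j < γ) : P.toFun j ≤ P.toFun (minElt Q γ) :=
  P.mono (le_of_lt (lt_minElt Q h))

lemma le_toFun_of_piece_le (P Q : IntervalPartition n) {γ : Fin (Q.p + 2)} {j : Fin (n + 2)}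
    (h : γ ≤ Q.toFun j) : P.toFun (minElt Q γ) ≤ P.toFun j :=
  P.mono (minElt_le_of_le Q h)

/-- `T_γ`, the first coordinate of the `γ`-component of `e_Q`-lifts of `e_P` points. -/
def Tval (ρ : ℝ) (c : Fin (n + 2) → ℝ) (P Q : IntervalPartition n) {d : ℕ} (x : Vec P.p d)
    (γ : Fin (Q.p + 2)) : ℝ :=
  fst (extTuple ρ c P x (P.toFun (minElt Q γ))) + offsetQ ρ c P Q (minElt Q γ)

lemma Tval_fst (ρ : ℝ) (c : Fin (n + 2) → ℝ) (P Q : IntervalPartition n) {d : ℕ}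
    (hd : 1 ≤ d) (x : Vec P.p d) {γ : Fin (Q.p + 2)}
    (h0 : 0 < (γ : ℕ)) (hl : (γ : ℕ) < Q.p + 1) :
    fst (extTuple ρ c Q (eMap ρ c P Q x) γ) = Tval ρ c P Q x γ := by
  have hγ := γ.isLt
  have h0' : ¬(γ : ℕ) = 0 := by omega
  have hl' : ¬(γ : ℕ) = Q.p + 1 := by omega
  simp only [extTuple, dif_neg h0', dif_neg hl']
  have helt : elt Q.p ⟨(γ : ℕ) - 1, by omega⟩ = γ := Fin.ext (by simp [elt]; omega)
  show fst (eMap ρ c P Q x _) = _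
  rw [eMap, PiLp.toLp_apply, helt, fst_add', fst_smul', fst_uVec hd, mul_one, Tval]

lemma Tval_LE (ρ : ℝ) (c : Fin (n + 2) → ℝ) (P Q : IntervalPartition n)
    (hsub : ∀ i j, Q.toFun i = Q.toFun j → P.toFun i = P.toFun j) {d : ℕ}
    (x : Vec P.p d) (γ : Fin (Q.p + 2)) :
    Tval ρ c P Q x γ = fst (extTuple ρ c P x (P.toFun (minElt Q γ)))
      + ρ * (cLE c Q γ - cLE c P (P.toFun (minElt Q γ))) := by
  have hm : Q.toFun (minElt Q γ) = γ := toFun_minElt Q γ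
  have hS1 : ∑ k ∈ Finset.univ.filter (fun k => Q.toFun k < γ), c k
      = ∑ k ∈ Finset.univ.filter (fun k => P.toFun k < P.toFun (minElt Q γ)), c k
        + ∑ k ∈ Finset.univ.filter
            (fun k => P.toFun k = P.toFun (minElt Q γ) ∧ Q.toFun k < γ), c k := by
    apply sum_split3
    · intro k
      constructor
      · intro hk
        rcases lt_or_eq_of_le (toFun_le_of_lt_piece P Q hk) with h | h
        · exact Or.inl h
        · exact Or.inr ⟨h, hk⟩
      · rintro (h | ⟨-, h⟩)
        · by_contra hc
          exact absurd (le_toFun_of_piece_le P Q (not_lt.1 hc)) (not_le.2 h)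
        · exact h
    · rintro k ⟨h1, h2, -⟩
      exact absurd h2 (ne_of_lt h1)
  unfold Tval offsetQ cLE
  rw [hm, hS1]
  ring

lemma Tval_GE (ρ : ℝ) (c : Fin (n + 2) → ℝ) (P Q : IntervalPartition n)
    (hsub : ∀ i j, Q.toFun i = Q.toFun j → P.toFun i = P.toFun j) {d : ℕ}
    (x : Vec P.p d) (γ : Fin (Q.p + 2)) :
    Tval ρ c P Q x γ = fst (extTuple ρ c P x (P.toFun (minElt Q γ)))
      + ρ * (cGE c P (P.toFun (minElt Q γ)) - cGE c Q γ) := by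
  have hm : Q.toFun (minElt Q γ) = γ := toFun_minElt Q γ
  set b := P.toFun (minElt Q γ) with hb
  have hS2a : ∑ k ∈ Finset.univ.filter (fun k => γ ≤ Q.toFun k), c k
      = ∑ k ∈ Finset.univ.filter (fun k => b < P.toFun k), c k
        + ∑ k ∈ Finset.univ.filter (fun k => P.toFun k = b ∧ γ ≤ Q.toFun k), c k := by
    apply sum_split3
    · intro k
      constructor
      · intro hk
        rcases lt_or_eq_of_le (le_toFun_of_piece_le P Q hk) with h | h
        · exact Or.inl h
        · exact Or.inr ⟨h.symm, hk⟩
      · rintro (h | ⟨-, h⟩)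
        · by_contra hc
          exact absurd (toFun_le_of_lt_piece P Q (not_le.1 hc)) (not_le.2 h)
        · exact h
    · rintro k ⟨h1, h2, -⟩
      exact absurd h2.symm (ne_of_lt h1)
  have hS2b : cPiece c P b
      = ∑ k ∈ Finset.univ.filter (fun k => P.toFun k = b ∧ Q.toFun k < γ), c k
        + ∑ k ∈ Finset.univ.filter (fun k => P.toFun k = b ∧ γ ≤ Q.toFun k), c k := by
    have : cPiece c P b = ∑ k ∈ Finset.univ.filter (fun k => P.toFun k = b), c k := rfl
    rw [this]
    apply sum_split3
    · intro k
      rcases lt_or_ge (Q.toFun k) γ with h | h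
      · constructor
        · intro hk; exact Or.inl ⟨hk, h⟩
        · rintro (⟨hk, -⟩ | ⟨hk, -⟩) <;> exact hk
      · constructor
        · intro hk; exact Or.inr ⟨hk, h⟩
        · rintro (⟨hk, -⟩ | ⟨hk, -⟩) <;> exact hk
    · rintro k ⟨⟨-, h1⟩, ⟨-, h2⟩⟩
      exact absurd h2 (not_le.2 h1)
  have hS2c : ∑ k ∈ Finset.univ.filter (fun k => γ ≤ Q.toFun k), c k
      = cPiece c Q γ + ∑ k ∈ Finset.univ.filter (fun k => γ < Q.toFun k), c k := by
    have hpc : cPiece c Q γ = ∑ k ∈ Finset.univ.filter (fun k => Q.toFun k = γ), c k := rfl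
    rw [hpc]
    apply sum_split3
    · intro k
      constructor
      · intro hk
        rcases eq_or_lt_of_le hk with h | h
        · exact Or.inl (by first | exact h | exact h.symm)
        · exact Or.inr h
      · rintro (h | h)
        · exact le_of_eq (by first | exact h | exact h.symm)
        · exact le_of_lt h
    · rintro k ⟨h1, h2⟩
      exact absurd h1 (ne_of_gt h2)
  unfold Tval offsetQ cGE
  rw [hm, ← hb]
  have h2 := hS2a
  rw [hS2c] at h2
  linear_combination ρ * h2 - ρ * hS2b

end Aux5
section Aux6

variable {n : ℕ}

lemma fst_extTuple_bot (ρ : ℝ) (c : Fin (n + 2) → ℝ) (P : IntervalPartition n) {d : ℕ}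
    (hd : 1 ≤ d) (x : Vec P.p d) {a : Fin (P.p + 2)} (h : (a : ℕ) = 0) :
    fst (extTuple ρ c P x a) = -1 + ρ * cPiece c P 0 / 2 := by
  simp only [extTuple, dif_pos h, fst_smul', fst_uVec hd, mul_one]

lemma fst_extTuple_top (ρ : ℝ) (c : Fin (n + 2) → ℝ) (P : IntervalPartition n) {d : ℕ}
    (hd : 1 ≤ d) (x : Vec P.p d) {a : Fin (P.p + 2)} (h : (a : ℕ) = P.p + 1) :
    fst (extTuple ρ c P x a) = 1 - ρ * cPiece c P (Fin.last (P.p + 1)) / 2 := by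
  have h0 : ¬(a : ℕ) = 0 := by omega
  simp only [extTuple, dif_neg h0, dif_pos h, fst_smul', fst_uVec hd, mul_one]

lemma cLE_zero (c : Fin (n + 2) → ℝ) (P : IntervalPartition n) :
    cLE c P 0 = cPiece c P 0 / 2 := by
  unfold cLE
  have h : Finset.univ.filter (fun i => P.toFun i < (0 : Fin (P.p + 2))) = ∅ := by
    apply Finset.filter_false_of_mem
    intro i _ hi
    rw [Fin.lt_def] at hi
    simp at hi
  rw [h, Finset.sum_empty, zero_add]

lemma cGE_last (c : Fin (n + 2) → ℝ) (P : IntervalPartition n) :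
    cGE c P (Fin.last (P.p + 1)) = cPiece c P (Fin.last (P.p + 1)) / 2 := by
  unfold cGE
  have h : Finset.univ.filter (fun i => Fin.last (P.p + 1) < P.toFun i) = ∅ := by
    apply Finset.filter_false_of_mem
    intro i _ hi
    rw [Fin.lt_def] at hi
    have := (P.toFun i).isLt
    simp [Fin.last] at hi
    omega
  rw [h, Finset.sum_empty, zero_add]

lemma cLE_sub (c : Fin (n + 2) → ℝ) (Q : IntervalPartition n) {α β : Fin (Q.p + 2)}
    (hαβ : α < β) : cLE c Q β - cLE c Q α = cBetween c Q α β := by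
  have hv : (α : ℕ) < (β : ℕ) := hαβ
  have hA : ∑ j ∈ Finset.univ.filter (fun j => Q.toFun j < β), c j
      = ∑ j ∈ Finset.univ.filter (fun j => Q.toFun j < α), c j
        + ∑ j ∈ Finset.univ.filter (fun j => α ≤ Q.toFun j ∧ Q.toFun j < β), c j := by
    apply sum_split3
    · intro j; simp only [Fin.lt_def, Fin.le_def]; omega
    · intro j; simp only [Fin.lt_def, Fin.le_def]; omega
  have hB : ∑ j ∈ Finset.univ.filter (fun j => α ≤ Q.toFun j ∧ Q.toFun j < β), c j
      = ∑ j ∈ Finset.univ.filter (fun j => Q.toFun j = α), c j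
        + ∑ j ∈ Finset.univ.filter (fun j => α < Q.toFun j ∧ Q.toFun j < β), c j := by
    apply sum_split3
    · intro j; simp only [Fin.lt_def, Fin.le_def, Fin.ext_iff]; omega
    · intro j; simp only [Fin.lt_def, Fin.le_def, Fin.ext_iff]; omega
  have hpc : cPiece c Q α = ∑ j ∈ Finset.univ.filter (fun j => Q.toFun j = α), c j := rfl
  unfold cLE cBetween
  rw [hA, hB, hpc]
  ring

lemma cGE_sub (c : Fin (n + 2) → ℝ) (Q : IntervalPartition n) {α β : Fin (Q.p + 2)}
    (hαβ : α < β) : cGE c Q α - cGE c Q β = cBetween c Q α β := by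
  have hv : (α : ℕ) < (β : ℕ) := hαβ
  have hA : ∑ j ∈ Finset.univ.filter (fun j => α < Q.toFun j), c j
      = ∑ j ∈ Finset.univ.filter (fun j => β ≤ Q.toFun j), c j
        + ∑ j ∈ Finset.univ.filter (fun j => α < Q.toFun j ∧ Q.toFun j < β), c j := by
    apply sum_split3
    · intro j; simp only [Fin.lt_def, Fin.le_def]; omega
    · intro j; simp only [Fin.lt_def, Fin.le_def]; omega
  have hB : ∑ j ∈ Finset.univ.filter (fun j => β ≤ Q.toFun j), c j
      = ∑ j ∈ Finset.univ.filter (fun j => Q.toFun j = β), c j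
        + ∑ j ∈ Finset.univ.filter (fun j => β < Q.toFun j), c j := by
    apply sum_split3
    · intro j; simp only [Fin.lt_def, Fin.le_def, Fin.ext_iff]; omega
    · intro j; simp only [Fin.lt_def, Fin.le_def, Fin.ext_iff]; omega
  have hpc : cPiece c Q β = ∑ j ∈ Finset.univ.filter (fun j => Q.toFun j = β), c j := rfl
  unfold cGE cBetween
  rw [hA, hB, hpc]
  ring

lemma cLE_add_cGE (c : Fin (n + 2) → ℝ) (hsum : ∑ i, c i = 1) (Q : IntervalPartition n)
    (γ : Fin (Q.p + 2)) : cLE c Q γ + cGE c Q γ = 1 := by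
  have hA : ∑ j ∈ Finset.univ.filter (fun _ => True), c j
      = ∑ j ∈ Finset.univ.filter (fun j => Q.toFun j < γ), c j
        + ∑ j ∈ Finset.univ.filter (fun j => γ ≤ Q.toFun j), c j := by
    apply sum_split3
    · intro j; simp only [Fin.lt_def, Fin.le_def]; constructor
      · intro; omega
      · intro; trivial
    · intro j; simp only [Fin.lt_def, Fin.le_def]; omega
  have hB : ∑ j ∈ Finset.univ.filter (fun j => γ ≤ Q.toFun j), c j
      = ∑ j ∈ Finset.univ.filter (fun j => Q.toFun j = γ), c j
        + ∑ j ∈ Finset.univ.filter (fun j => γ < Q.toFun j), c j := by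
    apply sum_split3
    · intro j; simp only [Fin.lt_def, Fin.le_def, Fin.ext_iff]; omega
    · intro j; simp only [Fin.lt_def, Fin.le_def, Fin.ext_iff]; omega
  rw [Finset.filter_true, hsum] at hA
  have hpc : cPiece c Q γ = ∑ j ∈ Finset.univ.filter (fun j => Q.toFun j = γ), c j := rfl
  unfold cLE cGE
  rw [hpc]
  linarith [hA, hB]

lemma Tval_bot (ρ : ℝ) (c : Fin (n + 2) → ℝ) (P Q : IntervalPartition n)
    (hsub : ∀ i j, Q.toFun i = Q.toFun j → P.toFun i = P.toFun j) {d : ℕ} (hd : 1 ≤ d)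
    (x : Vec P.p d) {α : Fin (Q.p + 2)} (h : P.toFun (minElt Q α) = 0) :
    Tval ρ c P Q x α = -1 + ρ * cLE c Q α := by
  rw [Tval_LE ρ c P Q hsub x α, h, fst_extTuple_bot ρ c P hd x (by rfl), cLE_zero]
  ring

lemma Tval_top (ρ : ℝ) (c : Fin (n + 2) → ℝ) (P Q : IntervalPartition n)
    (hsub : ∀ i j, Q.toFun i = Q.toFun j → P.toFun i = P.toFun j) {d : ℕ} (hd : 1 ≤ d)
    (x : Vec P.p d) {β : Fin (Q.p + 2)} (h : P.toFun (minElt Q β) = Fin.last (P.p + 1)) :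
    Tval ρ c P Q x β = 1 - ρ * cGE c Q β := by
  rw [Tval_GE ρ c P Q hsub x β, h, fst_extTuple_top ρ c P hd x (by rfl), cGE_last]
  ring

lemma Tval_diff (ρ : ℝ) (c : Fin (n + 2) → ℝ) (P Q : IntervalPartition n)
    (hsub : ∀ i j, Q.toFun i = Q.toFun j → P.toFun i = P.toFun j) {d : ℕ}
    (x : Vec P.p d) {α β : Fin (Q.p + 2)} (hαβ : α < β)
    (h : P.toFun (minElt Q α) = P.toFun (minElt Q β)) :
    Tval ρ c P Q x β - Tval ρ c P Q x α = ρ * cBetween c Q α β := by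
  rw [Tval_LE ρ c P Q hsub x α, Tval_LE ρ c P Q hsub x β, ← h]
  linear_combination ρ * cLE_sub c Q hαβ

end Aux6

/-- let `Q` be a subdivision of `P` and `G` a graph on `Q` with an edge
`e = (α,β)`.  If `α ∪ β` is contained in a single piece of `P`, or one of `α`, `β` is
contained in an extremal piece of `P`, then every point of `U_G¹` (taken with respect to
`Q`) lies outside `ν_P` or projects into `E_P`. -/
theorem statement_12
    (n d : ℕ) (hn : 1 ≤ n) (hd : 1 ≤ d) (ρ ε : ℝ) (c : Fin (n + 2) → ℝ)
    (hρ0 : 0 < ρ) (hρ1 : ρ < 1) (hε0 : 0 < ε) (hc : ∀ i, 0 < c i)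
    (hsum : ∑ i, c i = 1) (hc0 : 100 * ε / ρ < c 0)
    (hci : ∀ i : Fin (n + 2), 1 ≤ (i : ℕ) →
      100 * (ε / ρ + ∑ j ∈ Finset.univ.filter (fun j : Fin (n + 2) => (j : ℕ) < (i : ℕ)), c j)
        < c i)
    (P Q : IntervalPartition n) (hQP : Subdivides Q P)
    (G : GraphOn Q.p) (hG : IsGraphOn G)
    (e : Fin (Q.p + 2) × Fin (Q.p + 2)) (he : e ∈ G)
    (hcase : pieceMap Q P e.1 = pieceMap Q P e.2 ∨
      (pieceMap Q P e.1 = 0 ∨ (pieceMap Q P e.1 : ℕ) = P.p + 1 ∨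
       pieceMap Q P e.2 = 0 ∨ (pieceMap Q P e.2 : ℕ) = P.p + 1)) :
    ∀ y ∈ Uset1 ρ ε c Q d G,
      y ∉ nuP ρ ε c P d ∨ projP ρ c P y ∈ EsetP ρ ε c P d := by
  intro y hy
  by_cases hnu : y ∈ nuP ρ ε c P d
  swap
  · exact Or.inl hnu
  by_cases hEP : projP ρ c P y ∈ EsetP ρ ε c P d
  · exact Or.inr hEP
  exfalso
  obtain ⟨hsub, hpq⟩ := hQP
  obtain ⟨x, hx⟩ := hnu
  have hεP : 0 < epsP ε P := epsP_pos hε0 P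
  have hεQ8 : 8 * epsP ε P ≤ epsP ε Q := epsP_le_epsP hε0 hpq
  have hfac : ePt ρ c Q (eMap ρ c P Q x) = ePt ρ c P x := ePt_factor ρ c P Q hsub x
  have hyQ : y ∈ nuP ρ ε c Q d := ⟨eMap ρ c P Q x, by rw [hfac]; linarith⟩
  rcases hy with hy | hy
  · exact hy ⟨y, hyQ, rfl⟩
  obtain ⟨z, hzD, hz1⟩ := hy
  obtain ⟨h0α, hαβ, hβl⟩ := hG e he
  have hαβv : (e.1 : ℕ) < (e.2 : ℕ) := hαβ
  have hβlv : (e.2 : ℕ) < Q.p + 1 := hβl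
  have h0β : 0 < (e.2 : ℕ) := by omega
  have hαl : (e.1 : ℕ) < Q.p + 1 := by omega
  have hD : projP ρ c Q z ∈ Dset ρ ε c Q d e.1 e.2 := by
    have h := Set.mem_preimage.1 hzD
    exact Set.mem_iInter₂.1 h e he
  -- coordinatewise first-coordinate errors
  have herrP : ∀ i : Fin n, |fst (y i) - fst (ePt ρ c P x i)| ≤ epsP ε P := by
    intro i
    have h1 : fst (y i) - fst (ePt ρ c P x i) = fst ((y - ePt ρ c P x) i) := by
      rw [show (y - ePt ρ c P x) i = y i - ePt ρ c P x i from rfl, fst_sub']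
    rw [h1]
    calc |fst ((y - ePt ρ c P x) i)| ≤ ‖(y - ePt ρ c P x) i‖ := abs_fst_le _
      _ ≤ ‖y - ePt ρ c P x‖ := piLp2_apply_le _ _
      _ ≤ epsP ε P := hx.le
  have herrQ : ∀ i : Fin n, |fst (z i) - fst (ePt ρ c Q (eMap ρ c P Q x) i)| ≤ epsP ε P := by
    intro i
    have h2 : fst (z i) = fst (y i) := congrFun hz1 i
    rw [hfac, h2]
    exact herrP i
  -- the projections onto the Q-pieces of the edge
  have hfα : |fst (comp (projP ρ c Q z) e.1) - Tval ρ c P Q x e.1| ≤ epsP ε P := by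
    have h := avg_bound ρ c Q hd (eMap ρ c P Q x) z herrQ h0α hαl
    rwa [Tval_fst ρ c P Q hd x h0α hαl] at h
  have hfβ : |fst (comp (projP ρ c Q z) e.2) - Tval ρ c P Q x e.2| ≤ epsP ε P := by
    have h := avg_bound ρ c Q hd (eMap ρ c P Q x) z herrQ h0β hβlv
    rwa [Tval_fst ρ c P Q hd x h0β hβlv] at h
  -- consequences of y not projecting into E_P
  have hEb : ∀ b : Fin (P.p + 2), 0 < (b : ℕ) → (b : ℕ) < P.p + 1 →
      -1 + ρ * cLE c P b - epsP ε P < fst (comp (projP ρ c P y) b) ∧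
      fst (comp (projP ρ c P y) b) < 1 - ρ * cGE c P b + epsP ε P := by
    intro b h1 h2
    have hb : projP ρ c P y ∉ Eset ρ ε c P d b := by
      intro hmem
      exact hEP (Set.mem_biUnion
        (show b ∈ {a : Fin (P.p + 2) | 0 < (a : ℕ) ∧ (a : ℕ) < P.p + 1} from ⟨h1, h2⟩) hmem)
    simp only [Eset, Set.mem_setOf_eq, not_or, not_le] at hb
    exact ⟨hb.2.1, hb.2.2⟩
  have hX : ∀ b : Fin (P.p + 2), 0 < (b : ℕ) → (b : ℕ) < P.p + 1 →
      -1 + ρ * cLE c P b - 2 * epsP ε P < fst (extTuple ρ c P x b) ∧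
      fst (extTuple ρ c P x b) < 1 - ρ * cGE c P b + 2 * epsP ε P := by
    intro b h1 h2
    have ha := abs_le.1 (avg_bound ρ c P hd x y herrP h1 h2)
    have h3 := (hEb b h1 h2).1
    have h4 := (hEb b h1 h2).2
    exact ⟨by linarith [ha.2], by linarith [ha.1]⟩
  -- monotonicity of the piece map
  have hmm : minElt Q e.1 < minElt Q e.2 :=
    lt_of_toFun_lt Q (by rw [toFun_minElt, toFun_minElt]; exact hαβ)
  have hab : P.toFun (minElt Q e.1) ≤ P.toFun (minElt Q e.2) := P.mono hmm.le
  have habv : (P.toFun (minElt Q e.1) : ℕ) ≤ (P.toFun (minElt Q e.2) : ℕ) := hab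
  -- reduce the case hypothesis to three cases
  have hcase3 : P.toFun (minElt Q e.1) = P.toFun (minElt Q e.2) ∨
      P.toFun (minElt Q e.1) = 0 ∨ (P.toFun (minElt Q e.2) : ℕ) = P.p + 1 := by
    rcases hcase with h | h | h | h | h
    · exact Or.inl h
    · exact Or.inr (Or.inl h)
    · left
      apply Fin.ext
      have h' : (P.toFun (minElt Q e.1) : ℕ) = P.p + 1 := h
      have := (P.toFun (minElt Q e.2)).isLt
      omega
    · left
      apply Fin.ext
      have h' : (P.toFun (minElt Q e.2) : ℕ) = 0 := by
        rw [show pieceMap Q P e.2 = P.toFun (minElt Q e.2) from rfl] at h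
        rw [h]
        rfl
      omega
    · exact Or.inr (Or.inr h)
  -- key inequality on the model values
  have hKEY : ρ * cBetween c Q e.1 e.2 - 2 * epsP ε P
      ≤ Tval ρ c P Q x e.2 - Tval ρ c P Q x e.1 := by
    have hdiff : P.toFun (minElt Q e.1) = P.toFun (minElt Q e.2) →
        ρ * cBetween c Q e.1 e.2 - 2 * epsP ε P
          ≤ Tval ρ c P Q x e.2 - Tval ρ c P Q x e.1 := by
      intro h
      have := Tval_diff ρ c P Q hsub x hαβ h
      linarith
    rcases hcase3 with h | h | h
    · exact hdiff h
    · -- the P-piece of e.1 is the bottom piece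
      have h1 : Tval ρ c P Q x e.1 = -1 + ρ * cLE c Q e.1 := Tval_bot ρ c P Q hsub hd x h
      have h4 := cLE_sub c Q hαβ
      have h6 : ρ * cLE c Q e.2 - ρ * cLE c Q e.1 = ρ * cBetween c Q e.1 e.2 := by
        rw [← mul_sub, h4]
      by_cases hBl : (P.toFun (minElt Q e.2) : ℕ) = P.p + 1
      · have h2 : Tval ρ c P Q x e.2 = 1 - ρ * cGE c Q e.2 :=
          Tval_top ρ c P Q hsub hd x (Fin.ext (by simpa [Fin.last] using hBl))
        have h3 := cLE_add_cGE c hsum Q e.2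
        have h5 : ρ * cLE c Q e.2 + ρ * cGE c Q e.2 = ρ := by
          rw [← mul_add, h3, mul_one]
        linarith
      · by_cases hB0 : (P.toFun (minElt Q e.2) : ℕ) = 0
        · apply hdiff
          apply Fin.ext
          have h' : (P.toFun (minElt Q e.1) : ℕ) = 0 := by rw [h]; rfl
          omega
        · have hBlt := (P.toFun (minElt Q e.2)).isLt
          have h2 := Tval_LE ρ c P Q hsub x e.2
          have h3 := (hX (P.toFun (minElt Q e.2)) (by omega) (by omega)).1
          have h7 : ρ * (cLE c Q e.2 - cLE c P (P.toFun (minElt Q e.2)))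
              = ρ * cLE c Q e.2 - ρ * cLE c P (P.toFun (minElt Q e.2)) := mul_sub _ _ _
          linarith
    · -- the P-piece of e.2 is the top piece
      have h2 : Tval ρ c P Q x e.2 = 1 - ρ * cGE c Q e.2 :=
        Tval_top ρ c P Q hsub hd x (Fin.ext (by simpa [Fin.last] using h))
      have h4 := cGE_sub c Q hαβ
      have h6 : ρ * cGE c Q e.1 - ρ * cGE c Q e.2 = ρ * cBetween c Q e.1 e.2 := by
        rw [← mul_sub, h4]
      by_cases hA0 : (P.toFun (minElt Q e.1) : ℕ) = 0
      · have h1 : Tval ρ c P Q x e.1 = -1 + ρ * cLE c Q e.1 :=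
          Tval_bot ρ c P Q hsub hd x (Fin.ext hA0)
        have h3 := cLE_add_cGE c hsum Q e.1
        have h5 : ρ * cLE c Q e.1 + ρ * cGE c Q e.1 = ρ := by
          rw [← mul_add, h3, mul_one]
        linarith
      · by_cases hAl : (P.toFun (minElt Q e.1) : ℕ) = P.p + 1
        · apply hdiff
          apply Fin.ext
          omega
        · have hAlt := (P.toFun (minElt Q e.1)).isLt
          have h1 := Tval_GE ρ c P Q hsub x e.1
          have h3 := (hX (P.toFun (minElt Q e.1)) (by omega) (by omega)).2
          have h7 : ρ * (cGE c P (P.toFun (minElt Q e.1)) - cGE c Q e.1)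
              = ρ * cGE c P (P.toFun (minElt Q e.1)) - ρ * cGE c Q e.1 := mul_sub _ _ _
          linarith
  -- conclude: contradiction with the D-set membership
  have hfst_le : |fst (comp (projP ρ c Q z) e.1) - fst (comp (projP ρ c Q z) e.2)|
      ≤ ‖comp (projP ρ c Q z) e.1 - comp (projP ρ c Q z) e.2‖ := by
    rw [← fst_sub']
    exact abs_fst_le _
  have hDle : ‖comp (projP ρ c Q z) e.1 - comp (projP ρ c Q z) e.2‖
      ≤ ρ * cBetween c Q e.1 e.2 - epsP ε Q := hD
  have habs1 := abs_le.1 hfα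
  have habs2 := abs_le.1 hfβ
  have hge : ρ * cBetween c Q e.1 e.2 - 4 * epsP ε P
      ≤ fst (comp (projP ρ c Q z) e.2) - fst (comp (projP ρ c Q z) e.1) := by
    linarith [habs1.1, habs1.2, habs2.1, habs2.2]
  have hle : fst (comp (projP ρ c Q z) e.2) - fst (comp (projP ρ c Q z) e.1)
      ≤ |fst (comp (projP ρ c Q z) e.1) - fst (comp (projP ρ c Q z) e.2)| := by
    rw [abs_sub_comm]
    exact le_abs_self _
  linarith


end SinhaKnots
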